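/- arXiv:1812.10499 — 2 statements merged into one kernel-verified Lean document; each statement's English description precedes it below -/
import Mathlib

section
/- For every vertex x with x ≠ v0, the shortest-path cost satisfies the Bellman optimality equation: cost x equals the infimum, over all vertices v with E v x, of cost v + w v x (the infimum being ∞ if x has no in-edges). In particular, the cost of reaching x ≠ v0 is determined by the costs of its in-neighbors. -/
open scoped ENNReal

variable {V : Type*}

/-- `IsPath E v0 x p` means `p` is a finite sequence of vertices starting at `v0`,
ending at `x`, with consecutive vertices joined by edges of `E`. -/
def IsPath (E : V → V → Prop) (v0 x : V) (p : List V) : Prop :=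
  p.Chain' E ∧ p.head? = some v0 ∧ p.getLast? = some x

/-- The cost of a path: the sum of the weights of its consecutive edges. -/
noncomputable def pathCost (w : V → V → ℝ≥0∞) (p : List V) : ℝ≥0∞ :=
  ((p.zip p.tail).map fun q => w q.1 q.2).sum

/-- `cost E w v0 x` : the infimum of the costs of all paths from `v0` to `x`
(`∞` if `x` is unreachable from `v0`). -/
noncomputable def cost (E : V → V → Prop) (w : V → V → ℝ≥0∞) (v0 x : V) : ℝ≥0∞ :=
  ⨅ p : {p : List V // IsPath E v0 x p}, pathCost w p.1

/-! Every path to `x ≠ v0` has at least two vertices, so it is a path to some in-neighbour `v`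
followed by the edge `v → x`; conversely every such extension is a path to `x`. -/

lemma pathCost_append_pair (w : V → V → ℝ≥0∞) (a b : V) :
    ∀ l : List V, pathCost w (l ++ [a, b]) = pathCost w (l ++ [a]) + w a b
  | [] => by simp [pathCost]
  | [c] => by simp [pathCost]
  | c :: d :: l => by
    have ih := pathCost_append_pair w a b (d :: l)
    simp only [List.cons_append, pathCost, List.tail_cons, List.zip_cons_cons, List.map_cons,
      List.sum_cons] at ih ⊢
    rw [ih, add_assoc]

lemma pathCost_concat (w : V → V → ℝ≥0∞) {q : List V} {v : V} (hq : q.getLast? = some v)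
    (x : V) : pathCost w (q ++ [x]) = pathCost w q + w v x := by
  obtain ⟨r, rfl⟩ := List.getLast?_eq_some_iff.mp hq
  simpa using pathCost_append_pair w v x r

section IsPath

variable {E : V → V → Prop} {v0 v x : V} {p q : List V}

lemma IsPath.concat (hq : IsPath E v0 v q) (hvx : E v x) : IsPath E v0 x (q ++ [x]) := by
  obtain ⟨hchain, hhead, hlast⟩ := hq
  refine ⟨hchain.append (List.isChain_singleton x) ?_, ?_, List.getLast?_concat⟩
  · simpa [hlast] using hvx
  · rwa [List.head?_append_of_ne_nil _ (by rintro rfl; simp at hhead)]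

lemma IsPath.exists_concat (hp : IsPath E v0 x p) (hx : x ≠ v0) :
    ∃ v q, IsPath E v0 v q ∧ E v x ∧ p = q ++ [x] := by
  obtain ⟨hchain, hhead, hlast⟩ := hp
  obtain ⟨q, rfl⟩ := List.getLast?_eq_some_iff.mp hlast
  obtain rfl | ⟨r, v, rfl⟩ := List.eq_nil_or_concat q
  · exact absurd (by simpa using hhead) hx
  rw [List.concat_eq_append] at hchain hhead ⊢
  obtain ⟨hchain, -, hvx⟩ := List.isChain_append.mp hchain
  refine ⟨v, r ++ [v], ⟨hchain, ?_, List.getLast?_concat⟩, hvx v (by simp) x rfl, rfl⟩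
  simpa using hhead

end IsPath

lemma cost_le_pathCost {E : V → V → Prop} (w : V → V → ℝ≥0∞) {v0 x : V} {p : List V}
    (hp : IsPath E v0 x p) : cost E w v0 x ≤ pathCost w p :=
  iInf_le (fun p : {p : List V // IsPath E v0 x p} => pathCost w p.1) ⟨p, hp⟩

lemma cost_le_cost_add {E : V → V → Prop} (w : V → V → ℝ≥0∞) {v0 v x : V} (hvx : E v x) :
    cost E w v0 x ≤ cost E w v0 v + w v x :=
  calc cost E w v0 x ≤ ⨅ q : {q : List V // IsPath E v0 v q}, pathCost w q.1 + w v x :=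
        le_iInf fun q => (cost_le_pathCost w (q.2.concat hvx)).trans_eq
          (pathCost_concat w q.2.2.2 x)
    _ = cost E w v0 v + w v x := ENNReal.iInf_add.symm

theorem bellman_optimality_general (E : V → V → Prop) (w : V → V → ℝ≥0∞)
    (v0 x : V) (hx : x ≠ v0) :
    cost E w v0 x = ⨅ v : {v : V // E v x}, (cost E w v0 v.1 + w v.1 x) := by
  apply le_antisymm
  · exact le_iInf fun ⟨v, hvx⟩ => cost_le_cost_add w hvx
  · refine le_iInf fun ⟨p, hp⟩ => ?_
    obtain ⟨v, q, hq, hvx, rfl⟩ := hp.exists_concat hx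
    calc ⨅ u : {u : V // E u x}, cost E w v0 u.1 + w u.1 x
        ≤ cost E w v0 v + w v x := iInf_le_of_le ⟨v, hvx⟩ le_rfl
      _ ≤ pathCost w q + w v x := by gcongr; exact cost_le_pathCost w hq
      _ = pathCost w (q ++ [x]) := (pathCost_concat w hq.2.2 x).symm

/-- Bellman optimality equation: for `x ≠ v0`, the shortest-path cost of `x`
equals the infimum over in-neighbors `v` of `cost v + w v x`. -/
theorem bellman_optimality [Fintype V] (E : V → V → Prop) (w : V → V → ℝ≥0∞)
    (hpos : ∀ u v, E u v → 0 < w u v) (hfin : ∀ u v, E u v → w u v < ⊤)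
    (v0 x : V) (hx : x ≠ v0) :
    cost E w v0 x = ⨅ v : {v : V // E v x}, (cost E w v0 v.1 + w v.1 x) :=
  bellman_optimality_general E w v0 x hx
end

section
/- (Dijkstra frontier invariant, used in the proof of Lemma 5.) For every vertex v with v ∉ F, the cost of v is at least the minimum tentative distance of the unfixed vertices: ⨅ {D y : y ∉ F} ≤ cost v. -/
open scoped ENNReal

variable {V : Type*}

/-- An `F`-path from `v0` to `x` : a path all of whose vertices other than the
final vertex `x` lie in `F`. `Dfun E w v0 F x` is the infimum of the costs of
`F`-paths from `v0` to `x` (`∞` if no `F`-path to `x` exists). -/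
noncomputable def Dfun (E : V → V → Prop) (w : V → V → ℝ≥0∞) (v0 : V) (F : Set V)
    (x : V) : ℝ≥0∞ :=
  ⨅ p : {p : List V // IsPath E v0 x p ∧ ∀ v ∈ p.dropLast, v ∈ F}, pathCost w p.1

/-! The first vertex outside `F` on a path to `v` is reached by an `F`-path, namely the prefix of
the path up to that vertex, and prefixes cost no more than the whole path (weights are
nonnegative). -/

theorem List.exists_concat_prefix_of_not {α : Type*} {P : α → Prop} {p : List α} {x : α}
    (hx : x ∈ p) (hPx : ¬P x) :
    ∃ l y, l ++ [y] <+: p ∧ (∀ u ∈ l, P u) ∧ ¬P y := by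
  induction p with
  | nil => simp at hx
  | cons a t ih =>
    by_cases hPa : P a
    · have hxt : x ∈ t := by
        rcases List.mem_cons.1 hx with rfl | hxt
        · exact absurd hPa hPx
        · exact hxt
      obtain ⟨l, y, hpre, hl, hy⟩ := ih hxt
      refine ⟨a :: l, y, ?_, ?_, hy⟩
      · simpa using hpre
      · simpa [hPa] using hl
    · exact ⟨[], a, by simp, by simp, hPa⟩

theorem pathCost_cons_cons (w : V → V → ℝ≥0∞) (a b : V) (l : List V) :
    pathCost w (a :: b :: l) = w a b + pathCost w (b :: l) := by
  simp [pathCost]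

theorem pathCost_le_of_prefix (w : V → V → ℝ≥0∞) {q p : List V} (h : q <+: p) :
    pathCost w q ≤ pathCost w p := by
  obtain ⟨r, rfl⟩ := h
  induction q with
  | nil => simp [pathCost]
  | cons a t ih =>
    cases t with
    | nil => simp [pathCost]
    | cons b s =>
      simp only [List.cons_append, pathCost_cons_cons] at ih ⊢
      gcongr

theorem IsPath.of_concat_prefix {E : V → V → Prop} {v0 x y : V} {p l : List V}
    (hp : IsPath E v0 x p) (hpre : l ++ [y] <+: p) : IsPath E v0 y (l ++ [y]) := by
  obtain ⟨hchain, hhead, -⟩ := hp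
  refine ⟨hchain.prefix hpre, ?_, by simp⟩
  obtain ⟨r, rfl⟩ := hpre
  cases l <;> simpa using hhead

theorem exists_notMem_Dfun_le_pathCost {E : V → V → Prop} (w : V → V → ℝ≥0∞) {v0 v : V}
    {F : Set V} {p : List V} (hp : IsPath E v0 v p) (hv : v ∉ F) :
    ∃ y ∉ F, Dfun E w v0 F y ≤ pathCost w p := by
  have hvp : v ∈ p := List.mem_of_getLast? hp.2.2
  obtain ⟨l, y, hpre, hlF, hyF⟩ := List.exists_concat_prefix_of_not hvp hv
  have hFpath : IsPath E v0 y (l ++ [y]) ∧ ∀ u ∈ (l ++ [y]).dropLast, u ∈ F :=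
    ⟨hp.of_concat_prefix hpre, by simpa using hlF⟩
  exact ⟨y, hyF, (iInf_le _ ⟨_, hFpath⟩).trans (pathCost_le_of_prefix w hpre)⟩

theorem frontier_invariant_general (E : V → V → Prop) (w : V → V → ℝ≥0∞)
    (v0 : V) (F : Set V) (v : V) (hv : v ∉ F) :
    (⨅ y : {y : V // y ∉ F}, Dfun E w v0 F y.1) ≤ cost E w v0 v := by
  refine le_iInf fun ⟨p, hp⟩ => ?_
  obtain ⟨y, hyF, hle⟩ := exists_notMem_Dfun_le_pathCost w hp hv
  exact (iInf_le _ ⟨y, hyF⟩).trans hle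

/-- Dijkstra frontier invariant: for every unfixed vertex `v`, the minimum tentative
distance among unfixed vertices is a lower bound on `cost v`. -/
theorem frontier_invariant [Fintype V] (E : V → V → Prop) (w : V → V → ℝ≥0∞)
    (hpos : ∀ u v, E u v → 0 < w u v) (hfin : ∀ u v, E u v → w u v < ⊤)
    (v0 : V) (F : Set V) (hv0 : v0 ∈ F) (v : V) (hv : v ∉ F) :
    (⨅ y : {y : V // y ∉ F}, Dfun E w v0 F y.1) ≤ cost E w v0 v :=
  frontier_invariant_general E w v0 F v hv
end
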